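/- Let (X,φ) be a Smale space and let x ∈ X be an asymptotic p-periodic point for some p ∈ ℤ with p ≠ 0. Let p_s be the least positive asymptotic period of η^s(x) and p_u the least positive asymptotic period of η^u(x). Then: (i) (φ^{p_s}(x), x) ∈ G_φ^s; (ii) (φ^{p_u}(x), x) ∈ G_φ^u; (iii) if p is the least positive asymptotic period of x, then p = lcm(p_u, p_s), the least common multiple of p_u and p_s. -/

import Mathlib

open Filter Set Topology

noncomputable section

/-- Integer iterate of a homeomorphism. -/
def hIter {X : Type*} [TopologicalSpace X] (φ : X ≃ₜ X) (n : ℤ) (x : X) : X :=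
  ((φ.toEquiv : Equiv.Perm X) ^ n) x

/-- The cocycle sums `f^n` of a function `f : X → ℤ` along the iterates of `φ`:
`f^n(x) = Σ_{i=0}^{n-1} f(φ^i(x))` for `n > 0`, `f^0 = 0`, and
`f^n(x) = −Σ_{i=n}^{-1} f(φ^i(x))` for `n < 0`. -/
def cSum {X : Type*} [TopologicalSpace X] (φ : X ≃ₜ X) (f : X → ℤ) (n : ℤ) (x : X) : ℤ :=
  if 0 ≤ n then ∑ i ∈ Finset.range n.toNat, f (hIter φ i x)
  else -∑ i ∈ Finset.range (-n).toNat, f (hIter φ (n + i) x)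

/-- Stable asymptotic pairs (limit definition). -/
def asympS {X : Type*} [MetricSpace X] (φ : X ≃ₜ X) : Set (X × X) :=
  {p | Tendsto (fun n : ℕ => dist (hIter φ n p.1) (hIter φ n p.2)) atTop (nhds 0)}

/-- Unstable asymptotic pairs (limit definition). -/
def asympU {X : Type*} [MetricSpace X] (φ : X ≃ₜ X) : Set (X × X) :=
  {p | Tendsto (fun n : ℕ => dist (hIter φ (-(n : ℤ)) p.1) (hIter φ (-(n : ℤ)) p.2))
    atTop (nhds 0)}

/-- Asymptotic pairs (limit definition). -/
def asympA {X : Type*} [MetricSpace X] (φ : X ≃ₜ X) : Set (X × X) := asympS φ ∩ asympU φ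

/-- The `ω`-limit set of `x`. -/
def omegaSet {X : Type*} [MetricSpace X] (φ : X ≃ₜ X) (x : X) : Set X :=
  {z | ∃ n : ℕ → ℕ, StrictMono n ∧ Tendsto (fun i => hIter φ (n i) x) atTop (nhds z)}

/-- The `α`-limit set of `x`. -/
def alphaSet {X : Type*} [MetricSpace X] (φ : X ≃ₜ X) (x : X) : Set X :=
  {z | ∃ n : ℕ → ℤ, StrictAnti n ∧ Tendsto (fun i => hIter φ (n i) x) atTop (nhds z)}

/-- A Smale space structure on a compact metric space `X`. -/
structure SmaleSpace (X : Type*) [MetricSpace X] [CompactSpace X] where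
  phi : X ≃ₜ X
  eps : ℝ
  lam : ℝ
  br : X → X → X
  eps_pos : 0 < eps
  lam_pos : 0 < lam
  lam_lt_one : lam < 1
  br_cont : ContinuousOn (fun p : X × X => br p.1 p.2) {p : X × X | dist p.1 p.2 < eps}
  br_self : ∀ x : X, br x x = x
  br_assoc_left : ∀ x y z : X, dist x y < eps → dist (br x y) z < eps → dist x z < eps →
    br (br x y) z = br x z
  br_assoc_right : ∀ x y z : X, dist y z < eps → dist x (br y z) < eps → dist x z < eps →
    br x (br y z) = br x z
  phi_br : ∀ x y : X, dist x y < eps → dist (phi x) (phi y) < eps →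
    phi (br x y) = br (phi x) (phi y)
  contract_s : ∀ x y z : X, br y x = y → dist x y < eps → br z x = z → dist x z < eps →
    dist (phi y) (phi z) ≤ lam * dist y z
  contract_u : ∀ x y z : X, br x y = y → dist x y < eps → br x z = z → dist x z < eps →
    dist (phi.symm y) (phi.symm z) ≤ lam * dist y z

namespace SmaleSpace

variable {X Y : Type*} [MetricSpace X] [CompactSpace X] [MetricSpace Y] [CompactSpace Y]

/-- Local stable set `X^s(x,ε)`. -/
def Xs (S : SmaleSpace X) (x : X) (ε : ℝ) : Set X := {y | S.br y x = y ∧ dist x y < ε}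

/-- Local unstable set `X^u(x,ε)`. -/
def Xu (S : SmaleSpace X) (x : X) (ε : ℝ) : Set X := {y | S.br x y = y ∧ dist x y < ε}

def Gs0 (S : SmaleSpace X) : Set (X × X) := {p | p.2 ∈ S.Xs p.1 S.eps}

def Gu0 (S : SmaleSpace X) : Set (X × X) := {p | p.2 ∈ S.Xu p.1 S.eps}

/-- `G_φ^{s,n} = (φ×φ)^{-n}(G_φ^{s,0})`. -/
def GsN (S : SmaleSpace X) (n : ℤ) : Set (X × X) :=
  {p | (hIter S.phi n p.1, hIter S.phi n p.2) ∈ S.Gs0}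

/-- `G_φ^{u,n} = (φ×φ)^{n}(G_φ^{u,0})`. -/
def GuN (S : SmaleSpace X) (n : ℤ) : Set (X × X) :=
  {p | (hIter S.phi (-n) p.1, hIter S.phi (-n) p.2) ∈ S.Gu0}

def GaN (S : SmaleSpace X) (n : ℤ) : Set (X × X) := S.GsN n ∩ S.GuN n

/-- The asymptotic equivalence relation `G_φ^a = ⋃_{n ≥ 0} G_φ^{a,n}`. -/
def Ga (S : SmaleSpace X) : Set (X × X) := ⋃ n : ℕ, S.GaN n

lemma gaN_subset_ga (S : SmaleSpace X) (n : ℕ) : S.GaN n ⊆ S.Ga :=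
  Set.subset_iUnion (fun k : ℕ => S.GaN k) n

/-- The inductive limit topology on `G_φ^a`: a set is open iff its intersection with each
`G_φ^{a,n}` is open in the subspace topology from `X × X`. -/
def gaTopology (S : SmaleSpace X) : TopologicalSpace ↥S.Ga :=
  ⨆ n : ℕ, TopologicalSpace.coinduced (Set.inclusion (S.gaN_subset_ga n)) inferInstance

/-- Irreducibility of a Smale space. -/
def Irreducible (S : SmaleSpace X) : Prop :=
  ∀ U V : Set X, IsOpen U → U.Nonempty → IsOpen V → V.Nonempty →
    ∃ K : ℕ, ((hIter S.phi K '' U) ∩ V).Nonempty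

def IsPeriodicPoint (S : SmaleSpace X) (x : X) : Prop :=
  ∃ p : ℕ, 0 < p ∧ hIter S.phi p x = x

/-- `h` is a flip conjugacy between `(X,φ)` and `(Y,ψ)`. -/
def IsFlipConjugacy (S : SmaleSpace X) (T : SmaleSpace Y) (h : X ≃ₜ Y) : Prop :=
  (∀ x, h (S.phi x) = T.phi (h x)) ∨ (∀ x, h (S.phi x) = T.phi.symm (h x))

def FlipConjugate (S : SmaleSpace X) (T : SmaleSpace Y) : Prop :=
  ∃ h : X ≃ₜ Y, IsFlipConjugacy S T h

/-- An isomorphism of the principal étale groupoids `G_φ^a` and `G_ψ^a`: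
a bijection which is a homeomorphism for the inductive limit topologies and preserves
the (equivalence relation) groupoid structure. -/
structure GaIso (S : SmaleSpace X) (T : SmaleSpace Y) where
  toEquiv : ↥S.Ga ≃ ↥T.Ga
  cont : @Continuous _ _ S.gaTopology T.gaTopology toEquiv
  cont_symm : @Continuous _ _ T.gaTopology S.gaTopology toEquiv.symm
  map_mul : ∀ p q r : ↥S.Ga, (p : X × X).2 = (q : X × X).1 →
    (r : X × X) = ((p : X × X).1, (q : X × X).2) →
    (toEquiv p : Y × Y).2 = (toEquiv q : Y × Y).1 ∧
      (toEquiv r : Y × Y) = ((toEquiv p : Y × Y).1, (toEquiv q : Y × Y).2)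

end SmaleSpace

/-! If `φ^(|p| k) x → y_s`, then `y_s` is fixed by `φ^|p|` and, by continuity of the first `|p|`
iterates, `x` is stably asymptotic to `y_s`; dually `x` is unstably asymptotic to `y_u`. For a
point `a`, the times `t` with `(φ^t a, a)` stably (unstably) asymptotic form a subgroup of `ℤ`
which only depends on the stable (unstable) class of `a`. Hence the asymptotic periods of `x`
contain those common to `y_s` and `y_u`, namely `ℤ p_s ⊓ ℤ p_u = ℤ lcm(p_u, p_s)`, and `p` lies
in the latter subgroup because `y_s`, `y_u` are `p`-periodic. -/

section Iterates

variable {X : Type*} [TopologicalSpace X] {φ : X ≃ₜ X} {q : ℤ} {x y : X}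

theorem hIter_eq_coe_zpow (φ : X ≃ₜ X) (n : ℤ) : hIter φ n = ⇑(φ ^ n) := by
  let toPerm : (X ≃ₜ X) →* Equiv.Perm X :=
    { toFun := Homeomorph.toEquiv, map_one' := rfl, map_mul' := fun _ _ => rfl }
  ext x
  exact congrArg (fun f : Equiv.Perm X => f x) (map_zpow toPerm φ n).symm

theorem hIter_zero (φ : X ≃ₜ X) (x : X) : hIter φ 0 x = x := by
  simp [hIter_eq_coe_zpow]

theorem hIter_add (φ : X ≃ₜ X) (m n : ℤ) (x : X) :
    hIter φ (m + n) x = hIter φ m (hIter φ n x) := by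
  simp [hIter_eq_coe_zpow, zpow_add]

theorem hIter_symm (φ : X ≃ₜ X) (n : ℤ) : hIter φ.symm n = hIter φ (-n) := by
  rw [hIter_eq_coe_zpow, hIter_eq_coe_zpow, ← inv_zpow']
  rfl

theorem continuous_hIter (φ : X ≃ₜ X) (n : ℤ) : Continuous (hIter φ n) := by
  rw [hIter_eq_coe_zpow]
  exact (φ ^ n).continuous

theorem hIter_mul_eq_self (h : hIter φ q y = y) (k : ℤ) : hIter φ (q * k) y = y := by
  unfold hIter at h ⊢
  rw [zpow_mul]
  exact Equiv.Perm.zpow_apply_eq_self_of_apply_eq_self h k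

theorem hIter_eq_self_of_tendsto [T2Space X]
    (h : Tendsto (fun k : ℕ => hIter φ (q * k) x) atTop (𝓝 y)) : hIter φ q y = y := by
  have hshift : Tendsto (fun k : ℕ => hIter φ q (hIter φ (q * k) x)) atTop (𝓝 y) := by
    refine (h.comp (tendsto_add_atTop_nat 1)).congr fun k => ?_
    rw [Function.comp_apply, ← hIter_add]
    congr 1
    push_cast
    ring
  exact tendsto_nhds_unique (((continuous_hIter φ q).tendsto y).comp h) hshift

end Iterates

section Asymptotic

variable {X : Type*} [MetricSpace X] {φ : X ≃ₜ X} {q : ℤ} {a b c x y : X}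

theorem mem_asympS_iff_tendsto_int : (a, b) ∈ asympS φ ↔
    Tendsto (fun n : ℤ => dist (hIter φ n a) (hIter φ n b)) atTop (𝓝 0) := by
  rw [← Nat.map_cast_int_atTop, tendsto_map'_iff]
  rfl

theorem asympS_refl (φ : X ≃ₜ X) (a : X) : (a, a) ∈ asympS φ := by
  simp [asympS]

theorem asympS_symm (h : (a, b) ∈ asympS φ) : (b, a) ∈ asympS φ := by
  simpa only [asympS, mem_ofPred_eq, dist_comm] using h

theorem asympS_trans (hab : (a, b) ∈ asympS φ) (hbc : (b, c) ∈ asympS φ) :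
    (a, c) ∈ asympS φ := by
  refine squeeze_zero (fun n => dist_nonneg) (fun n => dist_triangle _ (hIter φ n b) _) ?_
  simpa using hab.add hbc

theorem asympS_hIter (h : (a, b) ∈ asympS φ) (m : ℤ) :
    (hIter φ m a, hIter φ m b) ∈ asympS φ := by
  rw [mem_asympS_iff_tendsto_int] at h ⊢
  refine (h.comp (tendsto_atTop_add_const_right atTop m tendsto_id)).congr fun n => ?_
  simp only [Function.comp_apply, id, hIter_add]

theorem asympU_eq_asympS_symm (φ : X ≃ₜ X) : asympU φ = asympS φ.symm := by
  ext ⟨a, b⟩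
  simp [asympU, asympS, hIter_symm]

theorem mem_asympS_of_tendsto (hq : 0 < q)
    (h : Tendsto (fun k : ℕ => hIter φ (q * k) x) atTop (𝓝 y)) : (x, y) ∈ asympS φ := by
  have hy : hIter φ q y = y := hIter_eq_self_of_tendsto h
  lift q to ℕ using hq.le
  -- Writing `n = n % q + q * (n / q)`, the orbits of `x` and of the `q`-periodic point `y` are
  -- at most `F (φ^(q * (n / q)) x)` apart at time `n`.
  set F : X → ℝ := fun z => ∑ r ∈ Finset.range q, dist (hIter φ r z) (hIter φ r y)
  have hF : Tendsto F (𝓝 y) (𝓝 0) := by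
    have hcont : Continuous F :=
      continuous_finsetSum _ fun r _ => (continuous_hIter φ r).dist continuous_const
    simpa [F] using hcont.tendsto y
  have bound (n : ℕ) : dist (hIter φ n x) (hIter φ n y) ≤ F (hIter φ (q * (n / q : ℕ)) x) := by
    have hn : (n : ℤ) = (n % q : ℕ) + q * (n / q : ℕ) := by
      exact_mod_cast (Nat.mod_add_div n q).symm
    rw [hn, hIter_add, hIter_add, hIter_mul_eq_self hy]
    exact Finset.single_le_sum (f := fun r : ℕ => dist (hIter φ r _) (hIter φ r y))
      (fun r _ => dist_nonneg) (Finset.mem_range.2 (Nat.mod_lt n (by omega)))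
  exact squeeze_zero (fun n => dist_nonneg) bound
    (hF.comp (h.comp (map_div_atTop_eq_nat q (by omega)).le))

theorem mem_asympU_of_tendsto (hq : 0 < q)
    (h : Tendsto (fun k : ℕ => hIter φ (-(q * k)) x) atTop (𝓝 y)) : (x, y) ∈ asympU φ := by
  rw [asympU_eq_asympS_symm]
  exact mem_asympS_of_tendsto hq (by simpa only [hIter_symm] using h)

end Asymptotic

section Periods

variable {X : Type*} [MetricSpace X] {φ : X ≃ₜ X} {a b c : X} {t : ℤ}

def stablePeriods (φ : X ≃ₜ X) (a : X) : AddSubgroup ℤ where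
  carrier := {t | (hIter φ t a, a) ∈ asympS φ}
  zero_mem' := by
    rw [mem_ofPred_eq, hIter_zero]
    exact asympS_refl φ a
  add_mem' {s t} hs ht := by
    have hshift := asympS_hIter hs t
    rw [← hIter_add, add_comm] at hshift
    exact asympS_trans hshift ht
  neg_mem' {t} ht := by
    have hshift := asympS_hIter ht (-t)
    rw [← hIter_add, neg_add_cancel, hIter_zero] at hshift
    exact asympS_symm hshift

theorem mem_stablePeriods : t ∈ stablePeriods φ a ↔ (hIter φ t a, a) ∈ asympS φ := Iff.rfl

-- The stable periods for `φ⁻¹`, with the carrier rewritten so that membership unfolds to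
-- `(hIter φ t a, a) ∈ asympU φ`.
def unstablePeriods (φ : X ≃ₜ X) (a : X) : AddSubgroup ℤ :=
  (stablePeriods φ.symm a).copy {t | (hIter φ t a, a) ∈ asympU φ} <| by
    ext t
    rw [mem_ofPred_eq, asympU_eq_asympS_symm, SetLike.mem_coe, ← neg_mem_iff,
      mem_stablePeriods, hIter_symm, neg_neg]

theorem unstablePeriods_eq_stablePeriods_symm :
    unstablePeriods φ a = stablePeriods φ.symm a :=
  AddSubgroup.copy_eq _ _ _

def asympPeriods (φ : X ≃ₜ X) (a : X) : AddSubgroup ℤ :=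
  stablePeriods φ a ⊓ unstablePeriods φ a

theorem stablePeriods_le_of_mem_asympS (h : (a, b) ∈ asympS φ) :
    stablePeriods φ b ≤ stablePeriods φ a := fun t ht =>
  asympS_trans (asympS_trans (asympS_hIter h t) ht) (asympS_symm h)

theorem stablePeriods_eq_of_mem_asympS (h : (a, b) ∈ asympS φ) :
    stablePeriods φ a = stablePeriods φ b :=
  le_antisymm (stablePeriods_le_of_mem_asympS (asympS_symm h))
    (stablePeriods_le_of_mem_asympS h)

theorem unstablePeriods_eq_of_mem_asympU (h : (a, b) ∈ asympU φ) :
    unstablePeriods φ a = unstablePeriods φ b := by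
  rw [asympU_eq_asympS_symm] at h
  simp only [unstablePeriods_eq_stablePeriods_symm, stablePeriods_eq_of_mem_asympS h]

theorem asympPeriods_inf_le (hs : (a, b) ∈ asympS φ) (hu : (a, c) ∈ asympU φ) :
    asympPeriods φ b ⊓ asympPeriods φ c ≤ asympPeriods φ a := by
  unfold asympPeriods
  rw [stablePeriods_eq_of_mem_asympS hs, unstablePeriods_eq_of_mem_asympU hu]
  exact inf_le_inf inf_le_left inf_le_right

theorem mem_asympPeriods_of_hIter_eq (h : hIter φ t a = a) : t ∈ asympPeriods φ a := by
  constructor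
  · show (hIter φ t a, a) ∈ asympS φ
    rw [h]
    exact asympS_refl φ a
  · show (hIter φ t a, a) ∈ asympU φ
    rw [h, asympU_eq_asympS_symm]
    exact asympS_refl φ.symm a

end Periods

theorem AddSubgroup.eq_zmultiples_of_isLeast {G : Type*} [AddCommGroup G] [LinearOrder G]
    [IsOrderedAddMonoid G] [Archimedean G] {H : AddSubgroup G} {d : G}
    (h : IsLeast {g | 0 < g ∧ g ∈ H} d) : H = zmultiples d := by
  rw [zmultiples_eq_closure]
  exact cyclic_of_min (by simpa only [and_comm] using h)

theorem asymptotic_periods_lcm_general {X : Type*} [MetricSpace X] [CompactSpace X]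
    (S : SmaleSpace X) (x : X) (p : ℤ) (hp : p ≠ 0)
    (ys yu : X)
    (hys : Tendsto (fun k : ℕ => hIter S.phi (|p| * k) x) atTop (nhds ys))
    (hyu : Tendsto (fun k : ℕ => hIter S.phi (-(|p| * k)) x) atTop (nhds yu))
    (ps pu : ℤ)
    (hps : IsLeast {q : ℤ | 0 < q ∧ (hIter S.phi q ys, ys) ∈ asympA S.phi} ps)
    (hpu : IsLeast {q : ℤ | 0 < q ∧ (hIter S.phi q yu, yu) ∈ asympA S.phi} pu) :
    (hIter S.phi ps x, x) ∈ asympS S.phi ∧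
    (hIter S.phi pu x, x) ∈ asympU S.phi ∧
    (IsLeast {q : ℤ | 0 < q ∧ (hIter S.phi q x, x) ∈ asympA S.phi} p →
      p = lcm pu ps) := by
  have hxys : (x, ys) ∈ asympS S.phi := mem_asympS_of_tendsto (abs_pos.2 hp) hys
  have hxyu : (x, yu) ∈ asympU S.phi := mem_asympU_of_tendsto (abs_pos.2 hp) hyu
  have hAys := AddSubgroup.eq_zmultiples_of_isLeast (H := asympPeriods S.phi ys) hps
  have hAyu := AddSubgroup.eq_zmultiples_of_isLeast (H := asympPeriods S.phi yu) hpu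
  refine ⟨(stablePeriods_eq_of_mem_asympS hxys).ge (hps.1.2.1),
    (unstablePeriods_eq_of_mem_asympU hxyu).ge (hpu.1.2.2), fun hp_least => ?_⟩
  have hAx := AddSubgroup.eq_zmultiples_of_isLeast (H := asympPeriods S.phi x) hp_least
  have hp_pos : 0 < p := hp_least.1.1
  rw [abs_of_pos hp_pos] at hys hyu
  have hyu_neg : Tendsto (fun k : ℕ => hIter S.phi (-p * k) x) atTop (𝓝 yu) := by
    simpa only [neg_mul] using hyu
  have h_inf : asympPeriods S.phi ys ⊓ asympPeriods S.phi yu =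
      AddSubgroup.zmultiples (lcm pu ps) := by
    rw [hAys, hAyu, Int.zmultiples_inf, Int.coe_lcm, lcm_comm]
  have hp_mem : p ∈ asympPeriods S.phi ys ⊓ asympPeriods S.phi yu :=
    AddSubgroup.mem_inf.2 ⟨mem_asympPeriods_of_hIter_eq (hIter_eq_self_of_tendsto hys),
      neg_mem_iff.1 (mem_asympPeriods_of_hIter_eq (hIter_eq_self_of_tendsto hyu_neg))⟩
  have hlcm_mem : lcm pu ps ∈ asympPeriods S.phi x :=
    asympPeriods_inf_le hxys hxyu (h_inf ▸ AddSubgroup.mem_zmultiples _)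
  rw [hAx] at hlcm_mem
  rw [h_inf] at hp_mem
  exact Int.dvd_antisymm hp_pos.le (Int.coe_lcm pu ps ▸ Int.natCast_nonneg _)
    (Int.mem_zmultiples_iff.1 hlcm_mem) (Int.mem_zmultiples_iff.1 hp_mem)

/-- For an asymptotic `p`-periodic point `x` with `η^s(x) = ys`,
`η^u(x) = yu` of least positive asymptotic periods `p_s`, `p_u`, one has
`(φ^{p_s}(x), x) ∈ G_φ^s`, `(φ^{p_u}(x), x) ∈ G_φ^u`, and if `p` is the least positive
asymptotic period of `x` then `p = lcm(p_u, p_s)`. -/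
theorem asymptotic_periods_lcm {X : Type*} [MetricSpace X] [CompactSpace X]
    (S : SmaleSpace X) (x : X) (p : ℤ) (hp : p ≠ 0)
    (hx : (hIter S.phi p x, x) ∈ asympA S.phi)
    (ys yu : X)
    (hys : Tendsto (fun k : ℕ => hIter S.phi (|p| * k) x) atTop (nhds ys))
    (hyu : Tendsto (fun k : ℕ => hIter S.phi (-(|p| * k)) x) atTop (nhds yu))
    (ps pu : ℤ)
    (hps : IsLeast {q : ℤ | 0 < q ∧ (hIter S.phi q ys, ys) ∈ asympA S.phi} ps)
    (hpu : IsLeast {q : ℤ | 0 < q ∧ (hIter S.phi q yu, yu) ∈ asympA S.phi} pu) :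
    (hIter S.phi ps x, x) ∈ asympS S.phi ∧
    (hIter S.phi pu x, x) ∈ asympU S.phi ∧
    (IsLeast {q : ℤ | 0 < q ∧ (hIter S.phi q x, x) ∈ asympA S.phi} p →
      p = lcm pu ps) :=
  asymptotic_periods_lcm_general S x p hp ys yu hys hyu ps pu hps hpu
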